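/- arXiv:1209.3898 — 4 statements merged into one kernel-verified Lean document; each statement's English description precedes it below -/
import Mathlib

section
/- Let A₁,…,A_d and B₁,…,B_d be D×D complex matrices such that ∑_{i=1}^d A_i A_i† = 𝟙 and ∑_{i=1}^d B_i† Λ B_i = Λ for some positive-definite D×D matrix Λ. Then every eigenvalue λ of the linear map X ↦ ∑_{i=1}^d A_i X B_i† on D×D complex matrices satisfies |λ| ≤ 1. -/
/-!
The map `X ↦ ∑ i, A i * X * (B i)ᴴ` is a contraction for the weighted Hilbert–Schmidt form
`tr (X Λ Xᴴ)`. With `Z i = X * (B i)ᴴ`, the co-isometry condition `∑ A i (A i)ᴴ = 1` gives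
`(∑ A i Z i)ᴴ (∑ A i Z i) ≤ ∑ (Z i)ᴴ Z i` in the Loewner order; pairing with `Λ` and using
`∑ (B i)ᴴ Λ B i = Λ` turns the right-hand side into `tr (X Λ Xᴴ)`. For an eigenvector `X ≠ 0`
this reads `|λ|² tr (X Λ Xᴴ) ≤ tr (X Λ Xᴴ)`, and `tr (X Λ Xᴴ) > 0` since `Λ` is positive definite.
-/

open Matrix ComplexOrder

namespace Matrix

variable {ι m n k R : Type*} [Fintype ι] [Fintype m] [Fintype n]

theorem trace_mul_mul_conjTranspose_pos {𝕜 : Type*} [RCLike 𝕜] [Fintype k] {Λ : Matrix k k 𝕜}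
    (hΛ : Λ.PosDef) {X : Matrix k k 𝕜} (hX : X ≠ 0) : 0 < trace (X * Λ * Xᴴ) := by
  let := Λ.toMatrixNormedAddCommGroup hΛ
  let := Λ.toMatrixInnerProductSpace hΛ.posSemidef
  have hinner : inner 𝕜 X X = trace (X * Λ * Xᴴ) := rfl
  refine lt_of_le_of_ne (hΛ.posSemidef.mul_mul_conjTranspose_same X).trace_nonneg ?_
  rw [ne_comm, ← hinner]
  exact inner_self_ne_zero.mpr hX

theorem sum_conjTranspose_mul_self_sub_eq [DecidableEq m] [Ring R] [StarRing R]
    {A : ι → Matrix m n R} (hA : ∑ i, A i * (A i)ᴴ = 1) (Z : ι → Matrix n k R) :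
    ∑ i, (Z i)ᴴ * Z i - (∑ i, A i * Z i)ᴴ * (∑ i, A i * Z i) =
      ∑ i, (Z i - (A i)ᴴ * ∑ j, A j * Z j)ᴴ * (Z i - (A i)ᴴ * ∑ j, A j * Z j) := by
  set V := ∑ j, A j * Z j
  have hV : ∑ i, (Z i)ᴴ * (A i)ᴴ * V = Vᴴ * V := by
    simp only [V, conjTranspose_sum, conjTranspose_mul, Matrix.sum_mul]
  have hV' : ∑ i, Vᴴ * (A i * Z i) = Vᴴ * V := by
    simp only [V, Matrix.mul_sum]
  have hAA : ∑ i, Vᴴ * (A i * ((A i)ᴴ * V)) = Vᴴ * V := by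
    calc ∑ i, Vᴴ * (A i * ((A i)ᴴ * V)) = Vᴴ * (∑ i, A i * (A i)ᴴ) * V := by
          simp only [Matrix.mul_sum, Matrix.sum_mul, Matrix.mul_assoc]
      _ = Vᴴ * V := by rw [hA, Matrix.mul_one]
  simp only [conjTranspose_sub, conjTranspose_mul, conjTranspose_conjTranspose, Matrix.sub_mul,
    Matrix.mul_sub, Finset.sum_sub_distrib, Matrix.mul_assoc] at hV ⊢
  rw [hV, hV', hAA]
  abel

variable [Fintype k] [CommRing R] [PartialOrder R] [StarRing R] [StarOrderedRing R]

theorem trace_mul_mul_conjTranspose_sum_mul_le [DecidableEq m]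
    {A : ι → Matrix m n R} (hA : ∑ i, A i * (A i)ᴴ = 1)
    {Λ : Matrix k k R} (hΛ : Λ.PosSemidef) (Z : ι → Matrix n k R) :
    trace ((∑ i, A i * Z i) * Λ * (∑ i, A i * Z i)ᴴ) ≤ ∑ i, trace (Z i * Λ * (Z i)ᴴ) := by
  set V := ∑ i, A i * Z i
  have hdefect : ∑ i, trace (Z i * Λ * (Z i)ᴴ) - trace (V * Λ * Vᴴ) =
      ∑ i, trace ((Z i - (A i)ᴴ * V) * Λ * (Z i - (A i)ᴴ * V)ᴴ) := by
    simp only [trace_mul_cycle _ Λ]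
    rw [← trace_sum, ← trace_sub, ← Matrix.sum_mul, ← Matrix.sub_mul,
      sum_conjTranspose_mul_self_sub_eq hA, Matrix.sum_mul, trace_sum]
  rw [← sub_nonneg, hdefect]
  exact Finset.sum_nonneg fun i _ ↦ (hΛ.mul_mul_conjTranspose_same _).trace_nonneg

theorem trace_mul_mul_conjTranspose_sum_mul_mul_le {l : Type*} [Fintype l] [DecidableEq m]
    {A : ι → Matrix m n R} (hA : ∑ i, A i * (A i)ᴴ = 1) {B : ι → Matrix l k R}
    {Λ : Matrix k k R} {Λ' : Matrix l l R} (hΛ' : Λ'.PosSemidef)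
    (hB : ∑ i, (B i)ᴴ * Λ' * B i = Λ) (X : Matrix n k R) :
    trace ((∑ i, A i * X * (B i)ᴴ) * Λ' * (∑ i, A i * X * (B i)ᴴ)ᴴ) ≤ trace (X * Λ * Xᴴ) := by
  have h := trace_mul_mul_conjTranspose_sum_mul_le hA hΛ' fun i ↦ X * (B i)ᴴ
  simp only [← Matrix.mul_assoc] at h
  refine h.trans_eq ?_
  simp only [← trace_sum, ← hB, conjTranspose_mul, conjTranspose_conjTranspose, Matrix.mul_sum,
    Matrix.sum_mul, Matrix.mul_assoc]

end Matrix

/-- If `∑ i, A i * (A i)ᴴ = 1` and `∑ i, (B i)ᴴ * Λ * B i = Λ` for a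
positive-definite matrix `Λ`, then every eigenvalue `lam` of the linear map
`X ↦ ∑ i, A i * X * (B i)ᴴ` satisfies `|lam| ≤ 1`. -/
theorem eigenvalue_modulus_le_one
    (D d : ℕ) (A B : Fin d → Matrix (Fin D) (Fin D) ℂ)
    (Λ : Matrix (Fin D) (Fin D) ℂ) (hΛ : Λ.PosDef)
    (hA : ∑ i, A i * (A i)ᴴ = 1)
    (hB : ∑ i, (B i)ᴴ * Λ * B i = Λ)
    (lam : ℂ) (X : Matrix (Fin D) (Fin D) ℂ) (hX : X ≠ 0)
    (heig : ∑ i, A i * X * (B i)ᴴ = lam • X) :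
    ‖lam‖ ≤ 1 := by
  have hcontr := trace_mul_mul_conjTranspose_sum_mul_mul_le hA hΛ.posSemidef hB X
  have hpos := trace_mul_mul_conjTranspose_pos hΛ hX
  rw [heig] at hcontr
  simp only [conjTranspose_smul, smul_mul_assoc, mul_smul_comm, smul_smul, trace_smul, smul_eq_mul,
    Complex.star_def, Complex.conj_mul'] at hcontr
  have hsq : ((‖lam‖ ^ 2 : ℝ) : ℂ) ≤ 1 := by
    push_cast
    exact le_of_mul_le_mul_right (by rwa [one_mul]) hpos
  exact (sq_le_one_iff₀ (norm_nonneg lam)).mp (by exact_mod_cast hsq)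
end

section
/- Let A₁,…,A_d and B₁,…,B_d be D×D complex matrices such that ∑_{i=1}^d A_i A_i† = 𝟙, ∑_{i=1}^d B_i† Λ B_i = Λ for some positive-definite D×D matrix Λ, and such that whenever ∑_{i=1}^d B_i Y B_i† = μ Y for a nonzero D×D matrix Y and μ ∈ ℂ with |μ| = 1, then μ = 1 and Y is a scalar multiple of 𝟙. If there exist a nonzero D×D matrix X and λ ∈ ℂ with |λ| ≥ 1 such that ∑_{i=1}^d A_i X B_i† = λ X, then there exist θ ∈ ℝ and a unitary D×D matrix U such that e^{iθ} A_i = U B_i U† for all i = 1,…,d. -/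
/-!
Measure matrices by `‖P‖²_Λ = tr (P Λ Pᴴ)`, a norm since `Λ` is positive definite. The two
trace-preservation conditions and the eigenvalue equation give, for the defects
`Pᵢ = X Bᵢᴴ - λ Aᵢᴴ X`, the identity `∑ ‖Pᵢ‖²_Λ = (1 - |λ|²) ‖X‖²_Λ`. Hence `|λ| ≥ 1` forces
`|λ| = 1` and `X Bᵢᴴ = λ Aᵢᴴ X` for all `i`. Then `Xᴴ X` is a fixed point of `Y ↦ ∑ Bᵢ Y Bᵢᴴ`, so by
primitivity it is a (necessarily positive) multiple of `1`: `X` is a multiple of a unitary `U`,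
and conjugating the intertwining relation gives `U Bᵢ Uᴴ = conj λ • Aᵢ`.
-/

open Matrix ComplexOrder

namespace Matrix

variable {n : Type*} [Fintype n]

section RCLike

variable {𝕜 : Type*} [RCLike 𝕜]

lemma PosSemidef.trace_mul_mul_conjTranspose_nonneg {Λ : Matrix n n 𝕜} (hΛ : Λ.PosSemidef)
    (P : Matrix n n 𝕜) : 0 ≤ (P * Λ * Pᴴ).trace :=
  (hΛ.mul_mul_conjTranspose_same P).trace_nonneg

lemma PosDef.trace_mul_mul_conjTranspose_eq_zero_iff {Λ : Matrix n n 𝕜}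
    (hΛ : Λ.PosDef) (P : Matrix n n 𝕜) : (P * Λ * Pᴴ).trace = 0 ↔ P = 0 := by
  classical
  refine ⟨fun h ↦ ?_, fun h ↦ by simp [h]⟩
  have hzero := (hΛ.posSemidef.mul_mul_conjTranspose_same P).trace_eq_zero_iff.mp h
  have hker : ∀ v, Pᴴ *ᵥ v = 0 := fun v ↦ by
    by_contra hv
    have hpos := hΛ.dotProduct_mulVec_pos hv
    rw [star_mulVec, conjTranspose_conjTranspose, ← dotProduct_mulVec, mulVec_mulVec,
      mulVec_mulVec, hzero, zero_mulVec, dotProduct_zero] at hpos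
    exact hpos.false
  rw [← conjTranspose_eq_zero]
  exact ext_of_mulVec_single fun i ↦ by rw [hker, zero_mulVec]

end RCLike

variable [DecidableEq n]

lemma mul_mul_conjTranspose_eq_star_smul {A B U : Matrix n n ℂ} {lam : ℂ}
    (hU : U ∈ unitaryGroup n ℂ) (hUB : U * Bᴴ = lam • (Aᴴ * U)) :
    U * B * Uᴴ = star lam • A := by
  have hBU : B * Uᴴ = star lam • (Uᴴ * A) := by
    simpa using congrArg conjTranspose hUB
  rw [Matrix.mul_assoc, hBU, Matrix.mul_smul, ← Matrix.mul_assoc, ← star_eq_conjTranspose,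
    mem_unitaryGroup_iff.mp hU, Matrix.one_mul]

lemma exists_smul_mem_unitaryGroup_of_conjTranspose_mul_self_eq_smul_one
    {X : Matrix n n ℂ} {c : ℂ} (hX : X ≠ 0) (hc : Xᴴ * X = c • 1) :
    ∃ r : ℂ, r • X ∈ unitaryGroup n ℂ := by
  obtain ⟨j⟩ : Nonempty n := not_isEmpty_iff.mp fun _ ↦ hX (Subsingleton.elim _ _)
  have hc0 : 0 ≤ c := by
    simpa [hc] using (posSemidef_conjTranspose_mul_self X).diag_nonneg (i := j)
  have hcne : c ≠ 0 := by
    rintro rfl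
    exact hX (conjTranspose_mul_self_eq_zero.mp (by simpa using hc))
  obtain ⟨s, hs, rfl⟩ : ∃ s : ℝ, 0 < s ∧ (s : ℂ) = c :=
    RCLike.pos_iff_exists_ofReal.mp (hc0.lt_of_ne hcne.symm)
  refine ⟨((√s)⁻¹ : ℝ), mem_unitaryGroup_iff'.mpr ?_⟩
  rw [star_eq_conjTranspose, conjTranspose_smul, smul_mul, Matrix.mul_smul, smul_smul, hc,
    smul_smul, Complex.star_def, Complex.conj_ofReal, ← Complex.ofReal_mul,
    ← Complex.ofReal_mul, ← sq, inv_pow, Real.sq_sqrt hs.le, inv_mul_cancel₀ hs.ne',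
    Complex.ofReal_one, one_smul]

variable {ι : Type*} [Fintype ι]

lemma sum_trace_sub_smul_mul_mul_conjTranspose (A B : ι → Matrix n n ℂ) (Λ X : Matrix n n ℂ)
    (lam : ℂ) (hA : ∑ i, A i * (A i)ᴴ = 1) (hB : ∑ i, (B i)ᴴ * Λ * B i = Λ)
    (heig : ∑ i, A i * X * (B i)ᴴ = lam • X) :
    ∑ i, ((X * (B i)ᴴ - lam • ((A i)ᴴ * X)) * Λ * (X * (B i)ᴴ - lam • ((A i)ᴴ * X))ᴴ).trace =
      (1 - Complex.normSq lam) * (X * Λ * Xᴴ).trace := by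
  set t := (X * Λ * Xᴴ).trace
  have hNN : ∑ i, (X * (B i)ᴴ * Λ * (X * (B i)ᴴ)ᴴ).trace = t := by
    calc ∑ i, (X * (B i)ᴴ * Λ * (X * (B i)ᴴ)ᴴ).trace
        = (X * (∑ i, (B i)ᴴ * Λ * B i) * Xᴴ).trace := by
          simp only [conjTranspose_mul, conjTranspose_conjTranspose, Finset.mul_sum,
            Finset.sum_mul, trace_sum, Matrix.mul_assoc]
      _ = t := by rw [hB]
  have hNM : ∑ i, (X * (B i)ᴴ * Λ * ((A i)ᴴ * X)ᴴ).trace = lam * t := by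
    calc ∑ i, (X * (B i)ᴴ * Λ * ((A i)ᴴ * X)ᴴ).trace
        = ∑ i, (A i * X * (B i)ᴴ * Λ * Xᴴ).trace := Finset.sum_congr rfl fun i _ ↦ by
          rw [conjTranspose_mul, conjTranspose_conjTranspose, ← Matrix.mul_assoc,
            trace_mul_comm, ← Matrix.mul_assoc, ← Matrix.mul_assoc, ← Matrix.mul_assoc]
      _ = lam * t := by
          rw [← trace_sum, ← Finset.sum_mul, ← Finset.sum_mul, heig, smul_mul, smul_mul,
            trace_smul, smul_eq_mul]
  have hMN : ∑ i, ((A i)ᴴ * X * Λ * (X * (B i)ᴴ)ᴴ).trace = star lam * t := by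
    calc ∑ i, ((A i)ᴴ * X * Λ * (X * (B i)ᴴ)ᴴ).trace
        = ∑ i, (X * Λ * (A i * X * (B i)ᴴ)ᴴ).trace := Finset.sum_congr rfl fun i _ ↦ by
          rw [Matrix.mul_assoc, Matrix.mul_assoc, trace_mul_comm]
          simp only [conjTranspose_mul, conjTranspose_conjTranspose, Matrix.mul_assoc]
      _ = star lam * t := by
          rw [← trace_sum, ← Finset.mul_sum, ← conjTranspose_sum, heig, conjTranspose_smul,
            Matrix.mul_smul, trace_smul, smul_eq_mul]
  have hMM : ∑ i, ((A i)ᴴ * X * Λ * ((A i)ᴴ * X)ᴴ).trace = t := by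
    calc ∑ i, ((A i)ᴴ * X * Λ * ((A i)ᴴ * X)ᴴ).trace
        = ∑ i, (A i * (A i)ᴴ * (X * Λ * Xᴴ)).trace := Finset.sum_congr rfl fun i _ ↦ by
          simp only [conjTranspose_mul, conjTranspose_conjTranspose, Matrix.mul_assoc]
          rw [trace_mul_comm (A i)]
          simp only [Matrix.mul_assoc]
      _ = t := by rw [← trace_sum, ← Finset.sum_mul, hA, Matrix.one_mul]
  simp only [conjTranspose_sub, conjTranspose_smul, sub_mul, mul_sub, smul_mul, Matrix.mul_smul,
    trace_sub, trace_smul, smul_eq_mul, Finset.sum_sub_distrib, ← Finset.mul_sum, hNN, hNM, hMN,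
    hMM, Complex.normSq_eq_conj_mul_self, Complex.star_def]
  ring

lemma norm_eq_one_and_mul_conjTranspose_eq_of_one_le_norm
    {A B : ι → Matrix n n ℂ} {Λ X : Matrix n n ℂ} {lam : ℂ} (hΛ : Λ.PosDef)
    (hA : ∑ i, A i * (A i)ᴴ = 1) (hB : ∑ i, (B i)ᴴ * Λ * B i = Λ) (hX : X ≠ 0)
    (hlam : 1 ≤ ‖lam‖) (heig : ∑ i, A i * X * (B i)ᴴ = lam • X) :
    ‖lam‖ = 1 ∧ ∀ i, X * (B i)ᴴ = lam • ((A i)ᴴ * X) := by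
  set P := fun i ↦ X * (B i)ᴴ - lam • ((A i)ᴴ * X)
  have hsum := sum_trace_sub_smul_mul_mul_conjTranspose A B Λ X lam hA hB heig
  have hP : ∀ i, 0 ≤ (P i * Λ * (P i)ᴴ).trace := fun i ↦
    hΛ.posSemidef.trace_mul_mul_conjTranspose_nonneg (P i)
  have ht : 0 < (X * Λ * Xᴴ).trace :=
    (hΛ.posSemidef.trace_mul_mul_conjTranspose_nonneg X).lt_of_ne
      (Ne.symm <| (hΛ.trace_mul_mul_conjTranspose_eq_zero_iff X).not.mpr hX)
  obtain ⟨t, htpos, htX⟩ : ∃ t : ℝ, 0 < t ∧ (t : ℂ) = (X * Λ * Xᴴ).trace :=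
    RCLike.pos_iff_exists_ofReal.mp ht
  have hnorm : ‖lam‖ = 1 := by
    have hle : 0 ≤ (1 - Complex.normSq lam) * t := by
      rw [← Complex.zero_le_real, Complex.ofReal_mul, Complex.ofReal_sub, Complex.ofReal_one, htX,
        ← hsum]
      exact Finset.sum_nonneg fun i _ ↦ hP i
    rw [Complex.normSq_eq_norm_sq] at hle
    nlinarith [nonneg_of_mul_nonneg_left hle htpos]
  refine ⟨hnorm, fun i ↦ sub_eq_zero.mp ?_⟩
  rw [← hΛ.trace_mul_mul_conjTranspose_eq_zero_iff]
  have hzero : ∑ i, (P i * Λ * (P i)ᴴ).trace = 0 := by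
    rw [hsum, Complex.normSq_eq_norm_sq, hnorm]
    norm_num
  exact (Finset.sum_eq_zero_iff_of_nonneg fun i _ ↦ hP i).mp hzero i (Finset.mem_univ i)

lemma sum_mul_conjTranspose_mul_self_mul_conjTranspose_eq {A B : ι → Matrix n n ℂ}
    {X : Matrix n n ℂ} {lam : ℂ} (hA : ∑ i, A i * (A i)ᴴ = 1) (hlam : ‖lam‖ = 1)
    (hXB : ∀ i, X * (B i)ᴴ = lam • ((A i)ᴴ * X)) :
    ∑ i, B i * (Xᴴ * X) * (B i)ᴴ = Xᴴ * X := by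
  calc ∑ i, B i * (Xᴴ * X) * (B i)ᴴ
      = ∑ i, (X * (B i)ᴴ)ᴴ * (X * (B i)ᴴ) := by
        simp only [conjTranspose_mul, conjTranspose_conjTranspose, Matrix.mul_assoc]
    _ = ∑ i, Xᴴ * (A i * (A i)ᴴ) * X := by
        simp only [hXB, conjTranspose_smul, conjTranspose_mul, conjTranspose_conjTranspose,
          smul_mul, Matrix.mul_smul, smul_smul, Complex.star_def, Complex.mul_conj', hlam,
          Complex.ofReal_one, one_pow, one_smul, Matrix.mul_assoc]
    _ = Xᴴ * X := by rw [← Finset.sum_mul, ← Finset.mul_sum, hA, Matrix.mul_one]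

end Matrix

/-- under the canonical-form conditions on `A` and `B`, an eigenvalue of
`X ↦ ∑ i, A i * X * (B i)ᴴ` of modulus at least one forces `A` and `B` to be related
by a phase and a unitary conjugation. -/
theorem eigenvalue_modulus_one_implies_unitarily_related
    (D d : ℕ) (A B : Fin d → Matrix (Fin D) (Fin D) ℂ)
    (Λ : Matrix (Fin D) (Fin D) ℂ) (hΛ : Λ.PosDef)
    (hA : ∑ i, A i * (A i)ᴴ = 1)
    (hB : ∑ i, (B i)ᴴ * Λ * B i = Λ)
    (hBprim : ∀ (μ : ℂ) (Y : Matrix (Fin D) (Fin D) ℂ), Y ≠ 0 → ‖μ‖ = 1 →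
      ∑ i, B i * Y * (B i)ᴴ = μ • Y → μ = 1 ∧ ∃ c : ℂ, Y = c • (1 : Matrix (Fin D) (Fin D) ℂ))
    (X : Matrix (Fin D) (Fin D) ℂ) (hX : X ≠ 0)
    (lam : ℂ) (hlam : 1 ≤ ‖lam‖)
    (heig : ∑ i, A i * X * (B i)ᴴ = lam • X) :
    ∃ (θ : ℝ) (U : Matrix (Fin D) (Fin D) ℂ), Uᴴ * U = 1 ∧
      ∀ i, Complex.exp (θ * Complex.I) • A i = U * B i * Uᴴ := by
  obtain ⟨hnorm, hXB⟩ := norm_eq_one_and_mul_conjTranspose_eq_of_one_le_norm hΛ hA hB hX hlam heig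
  obtain ⟨-, c, hc⟩ := hBprim 1 (Xᴴ * X) (mt conjTranspose_mul_self_eq_zero.mp hX) norm_one
    (by rw [one_smul]; exact sum_mul_conjTranspose_mul_self_mul_conjTranspose_eq hA hnorm hXB)
  obtain ⟨r, hU⟩ := exists_smul_mem_unitaryGroup_of_conjTranspose_mul_self_eq_smul_one hX hc
  obtain ⟨θ, hθ⟩ := (Complex.norm_eq_one_iff (star lam)).mp (by rwa [norm_star])
  refine ⟨θ, r • X, mem_unitaryGroup_iff'.mp hU, fun i ↦ ?_⟩
  rw [hθ]
  refine (mul_mul_conjTranspose_eq_star_smul hU ?_).symm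
  rw [smul_mul, hXB i, Matrix.mul_smul, smul_comm]
end

section
/- Let d, D, L be positive integers. Let A₁,…,A_d be D×D complex matrices with ∑_i A_i A_i† = 𝟙, and let Λ be a D×D positive semidefinite matrix with tr Λ = 1 and ∑_i A_i† Λ A_i = Λ. Let P be an orthogonal projection with PΛ = ΛP; set Λ̃ = PΛP, Ã_i = P A_i P and δ = tr(Λ − Λ̃). Define the maps E(X) = ∑_i A_i† X A_i and Ẽ(X) = ∑_i Ã_i† X Ã_i on D×D matrices. Then ‖Ẽ^L(Λ) − Λ‖₁ ≤ 2Lδ; in particular tr(Ẽ^L(Λ)) ≥ 1 − 2Lδ. -/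
open Matrix ComplexOrder

/-- The trace norm (sum of singular values) of a complex square matrix, defined as the
trace of the positive semidefinite square root of `Mᴴ * M`. -/
noncomputable def traceNorm {n : Type*} [Fintype n] [DecidableEq n]
    (M : Matrix n n ℂ) : ℝ :=
  (((Matrix.posSemidef_conjTranspose_mul_self M).1.eigenvectorUnitary : Matrix n n ℂ) *
    diagonal (fun i => ((Real.sqrt ((Matrix.posSemidef_conjTranspose_mul_self M).1.eigenvalues i) : ℝ) : ℂ)) *
    (star (Matrix.posSemidef_conjTranspose_mul_self M).1.eigenvectorUnitary : Matrix n n ℂ)).trace.re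

open scoped MatrixOrder

/-!
Put `Δ = Λ - PΛP`; since `P` commutes with `Λ`, `Δ = (1 - P) Λ (1 - P) ≥ 0`. Because
`Ẽ(X) = P E(PXP) P` and `E(Λ) = Λ`, one step of `Ẽ` gives `Ẽ(Λ) = Λ - C` with
`C = Δ + P E(Δ) P ≥ 0`, and `tr C ≤ 2 tr Δ` as `E` preserves traces. By linearity
`Ẽ^L(Λ) = Λ - S` with `S = ∑_{j<L} Ẽ^j(C)`. The map `Ẽ` is positive and, since
`∑ Ã_i Ã_iᴴ ≤ 1`, trace non-increasing on positive matrices, so `S ≥ 0` and `tr S ≤ L tr C`.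
For the positive matrix `S` the trace norm of `-S` is its trace.
-/

theorem Function.iterate_map_eq_sub_sum {M F : Type*} [AddCommGroup M] [FunLike F M M]
    [AddMonoidHomClass F M M] (f : F) {x c : M} (h : f x = x - c) (k : ℕ) :
    (⇑f)^[k] x = x - ∑ j ∈ Finset.range k, (⇑f)^[j] c := by
  induction k with
  | zero => simp
  | succ k ih =>
    rw [Function.iterate_succ_apply', ih, map_sub, h, map_sum, Finset.sum_range_succ']
    simp only [← Function.iterate_succ_apply' f, Function.iterate_zero_apply]
    abel

namespace Matrix

variable {n ι : Type*} [Fintype n]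

section TraceNorm

variable [DecidableEq n]

theorem traceNorm_eq_trace_sqrt (M : Matrix n n ℂ) :
    traceNorm M = (CFC.sqrt (Mᴴ * M)).trace.re := by
  have hM := posSemidef_conjTranspose_mul_self M
  rw [CFC.sqrt_eq_real_sqrt _ hM.nonneg, cfcₙ_eq_cfc, hM.1.cfc_eq]
  rfl

theorem traceNorm_neg (M : Matrix n n ℂ) : traceNorm (-M) = traceNorm M := by
  rw [traceNorm_eq_trace_sqrt, traceNorm_eq_trace_sqrt, conjTranspose_neg, neg_mul_neg]

theorem PosSemidef.traceNorm_eq {S : Matrix n n ℂ} (hS : S.PosSemidef) :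
    traceNorm S = S.trace.re := by
  rw [traceNorm_eq_trace_sqrt, hS.isHermitian.eq, CFC.sqrt_mul_self S hS.nonneg]

end TraceNorm

theorem PosSemidef.trace_re_nonneg {X : Matrix n n ℂ} (hX : X.PosSemidef) : 0 ≤ X.trace.re :=
  (Complex.nonneg_iff.mp hX.trace_nonneg).1

theorem PosSemidef.trace_re_mul_nonneg [DecidableEq n] {Y Z : Matrix n n ℂ}
    (hY : Y.PosSemidef) (hZ : Z.PosSemidef) : 0 ≤ (Y * Z).trace.re := by
  have hsqrt : (CFC.sqrt Y)ᴴ = CFC.sqrt Y := (CFC.sqrt_nonneg Y).posSemidef.isHermitian.eq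
  have h := (hZ.conjTranspose_mul_mul_same (CFC.sqrt Y)).trace_re_nonneg
  rwa [hsqrt, trace_mul_cycle, CFC.sqrt_mul_sqrt_self Y hY.nonneg] at h

theorem trace_re_mul_le_of_le_one [DecidableEq n] {Y F : Matrix n n ℂ} (hY : Y.PosSemidef)
    (hF : F ≤ 1) : (Y * F).trace.re ≤ Y.trace.re := by
  have h := hY.trace_re_mul_nonneg hF
  rw [mul_sub, mul_one, trace_sub, Complex.sub_re] at h
  linarith

theorem trace_re_conj_le [DecidableEq n] {P X : Matrix n n ℂ} (hP : IsStarProjection P)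
    (hX : X.PosSemidef) : (P * X * P).trace.re ≤ X.trace.re := by
  rw [trace_mul_cycle, hP.isIdempotentElem.eq, trace_mul_comm]
  exact trace_re_mul_le_of_le_one hX hP.le_one

theorem posSemidef_sub_conj_of_commute [DecidableEq n] {P Λ : Matrix n n ℂ}
    (hP : IsStarProjection P) (hΛ : Λ.PosSemidef) (hPΛ : Commute P Λ) :
    (Λ - P * Λ * P).PosSemidef := by
  have hQ : (1 - P)ᴴ = 1 - P := hP.one_sub.isSelfAdjoint
  have hPΛP : P * Λ * P = P * Λ := by
    rw [mul_assoc, ← hPΛ.eq, ← mul_assoc, hP.isIdempotentElem.eq]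
  have h : Λ - P * Λ * P = (1 - P)ᴴ * Λ * (1 - P) := by
    rw [hQ, sub_mul, one_mul, mul_sub, mul_one, sub_mul, ← hPΛ.eq, hPΛP]
    abel
  exact h ▸ hΛ.conjTranspose_mul_mul_same _

section Kraus

variable [Fintype ι]

def krausMap (K : ι → Matrix n n ℂ) : Matrix n n ℂ →ₗ[ℂ] Matrix n n ℂ where
  toFun X := ∑ i, (K i)ᴴ * X * K i
  map_add' X Y := by simp only [mul_add, add_mul, Finset.sum_add_distrib]
  map_smul' c X := by simp [Finset.smul_sum]

@[simp]
theorem krausMap_apply (K : ι → Matrix n n ℂ) (X : Matrix n n ℂ) :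
    krausMap K X = ∑ i, (K i)ᴴ * X * K i :=
  rfl

theorem PosSemidef.krausMap_apply (K : ι → Matrix n n ℂ) {X : Matrix n n ℂ}
    (hX : X.PosSemidef) : (krausMap K X).PosSemidef :=
  posSemidef_sum _ fun i _ => hX.conjTranspose_mul_mul_same (K i)

theorem PosSemidef.krausMap_iterate_apply (K : ι → Matrix n n ℂ) {X : Matrix n n ℂ}
    (hX : X.PosSemidef) (j : ℕ) : ((krausMap K)^[j] X).PosSemidef := by
  induction j with
  | zero => exact hX
  | succ j ih => rw [Function.iterate_succ_apply']; exact ih.krausMap_apply K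

theorem trace_krausMap (K : ι → Matrix n n ℂ) (X : Matrix n n ℂ) :
    (krausMap K X).trace = (X * ∑ i, K i * (K i)ᴴ).trace := by
  simp only [krausMap_apply, trace_sum, Finset.mul_sum]
  exact Finset.sum_congr rfl fun i _ => by
    rw [trace_mul_cycle, ← mul_assoc, trace_mul_comm, mul_assoc]

theorem krausMap_conj_apply {P : Matrix n n ℂ} (hP : Pᴴ = P) (K : ι → Matrix n n ℂ)
    (X : Matrix n n ℂ) :
    krausMap (fun i => P * K i * P) X = P * krausMap K (P * X * P) * P := by
  simp only [krausMap_apply, Finset.mul_sum, Finset.sum_mul, conjTranspose_mul, hP, mul_assoc]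

variable [DecidableEq n]

theorem trace_re_krausMap_le {K : ι → Matrix n n ℂ} (hK : ∑ i, K i * (K i)ᴴ ≤ 1)
    {X : Matrix n n ℂ} (hX : X.PosSemidef) : (krausMap K X).trace.re ≤ X.trace.re := by
  rw [trace_krausMap]
  exact trace_re_mul_le_of_le_one hX hK

theorem trace_re_krausMap_iterate_le {K : ι → Matrix n n ℂ} (hK : ∑ i, K i * (K i)ᴴ ≤ 1)
    {X : Matrix n n ℂ} (hX : X.PosSemidef) (j : ℕ) :
    ((krausMap K)^[j] X).trace.re ≤ X.trace.re := by
  induction j with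
  | zero => rfl
  | succ j ih =>
    rw [Function.iterate_succ_apply']
    exact (trace_re_krausMap_le hK (hX.krausMap_iterate_apply K j)).trans ih

theorem sum_conj_mul_conjTranspose_le_one {K : ι → Matrix n n ℂ} (hK : ∑ i, K i * (K i)ᴴ ≤ 1)
    {P : Matrix n n ℂ} (hP : IsStarProjection P) :
    ∑ i, (P * K i * P) * (P * K i * P)ᴴ ≤ 1 := by
  have hPh : Pᴴ = P := hP.isSelfAdjoint
  have hKPK : ∑ i, K i * P * (K i)ᴴ ≤ ∑ i, K i * (K i)ᴴ := Finset.sum_le_sum fun i _ => by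
    have h := star_right_conjugate_le_conjugate hP.le_one (K i)
    rw [mul_one] at h
    exact h
  calc ∑ i, (P * K i * P) * (P * K i * P)ᴴ = P * (∑ i, K i * P * (K i)ᴴ) * P := by
        simp only [conjTranspose_mul, hPh, Finset.mul_sum, Finset.sum_mul, mul_assoc,
          hP.isIdempotentElem.mul_self_mul]
    _ ≤ P * 1 * P := hP.isSelfAdjoint.conjugate_le_conjugate (hKPK.trans hK)
    _ ≤ 1 := by rw [mul_one, hP.isIdempotentElem.eq]; exact hP.le_one

theorem exists_krausMap_iterate_eq_sub {K : ι → Matrix n n ℂ} (hK : ∑ i, K i * (K i)ᴴ ≤ 1)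
    {Λ C : Matrix n n ℂ} (hC : C.PosSemidef) (hΛ : krausMap K Λ = Λ - C) (L : ℕ) :
    ∃ S : Matrix n n ℂ, S.PosSemidef ∧ S.trace.re ≤ L * C.trace.re ∧
      (krausMap K)^[L] Λ = Λ - S := by
  refine ⟨∑ j ∈ Finset.range L, (krausMap K)^[j] C,
    posSemidef_sum _ fun j _ => hC.krausMap_iterate_apply K j, ?_,
    Function.iterate_map_eq_sub_sum _ hΛ L⟩
  calc (∑ j ∈ Finset.range L, (krausMap K)^[j] C).trace.re
      = ∑ j ∈ Finset.range L, ((krausMap K)^[j] C).trace.re := by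
        rw [trace_sum, Complex.re_sum]
    _ ≤ ∑ _j ∈ Finset.range L, C.trace.re :=
        Finset.sum_le_sum fun j _ => trace_re_krausMap_iterate_le hK hC j
    _ = L * C.trace.re := by simp

theorem exists_krausMap_conj_apply_eq_sub {K : ι → Matrix n n ℂ} (hK : ∑ i, K i * (K i)ᴴ = 1)
    {Λ P : Matrix n n ℂ} (hΛ : Λ.PosSemidef) (hfix : krausMap K Λ = Λ)
    (hP : IsStarProjection P) (hPΛ : Commute P Λ) :
    ∃ C : Matrix n n ℂ, C.PosSemidef ∧ C.trace.re ≤ 2 * (Λ - P * Λ * P).trace.re ∧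
      krausMap (fun i => P * K i * P) Λ = Λ - C := by
  have hPh : Pᴴ = P := hP.isSelfAdjoint
  set Δ := Λ - P * Λ * P
  have hΔ : Δ.PosSemidef := posSemidef_sub_conj_of_commute hP hΛ hPΛ
  have hEΔ : (krausMap K Δ).PosSemidef := hΔ.krausMap_apply K
  have hPΛP : P * Λ * P = Λ - Δ := (sub_sub_cancel Λ _).symm
  refine ⟨Δ + P * krausMap K Δ * P, ?_, ?_, ?_⟩
  · have hPEΔP := hEΔ.conjTranspose_mul_mul_same P
    rw [hPh] at hPEΔP
    exact hΔ.add hPEΔP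
  · have htrEΔ : (krausMap K Δ).trace = Δ.trace := by rw [trace_krausMap, hK, mul_one]
    have hPEΔP := trace_re_conj_le hP hEΔ
    rw [htrEΔ] at hPEΔP
    rw [trace_add, Complex.add_re]
    linarith
  · rw [krausMap_conj_apply hPh, hPΛP, map_sub, hfix, mul_sub, sub_mul, hPΛP]
    abel

end Kraus

end Matrix

theorem projected_channel_iterate_close_to_fixed_point_general
    (d D L : ℕ)
    (A : Fin d → Matrix (Fin D) (Fin D) ℂ)
    (Λ : Matrix (Fin D) (Fin D) ℂ) (hΛ : Λ.PosSemidef) (htr : Λ.trace = 1)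
    (hA : ∑ i, A i * (A i)ᴴ = 1)
    (hfix : ∑ i, (A i)ᴴ * Λ * A i = Λ)
    (P : Matrix (Fin D) (Fin D) ℂ)
    (hP : Pᴴ = P) (hP2 : P * P = P) (hPΛ : P * Λ = Λ * P) :
    traceNorm
        ((fun X => ∑ i, (P * A i * P)ᴴ * X * (P * A i * P))^[L] Λ - Λ) ≤
      2 * (L : ℝ) * (Λ - P * Λ * P).trace.re ∧
    1 - 2 * (L : ℝ) * (Λ - P * Λ * P).trace.re ≤
      ((fun X => ∑ i, (P * A i * P)ᴴ * X * (P * A i * P))^[L] Λ).trace.re := by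
  have hProj : IsStarProjection P := ⟨hP2, hP⟩
  obtain ⟨C, hC, htrC, hstep⟩ := exists_krausMap_conj_apply_eq_sub hA hΛ hfix hProj hPΛ
  obtain ⟨S, hS, htrS, hiter⟩ :=
    exists_krausMap_iterate_eq_sub (sum_conj_mul_conjTranspose_le_one hA.le hProj) hC hstep L
  have hE : (fun X => ∑ i, (P * A i * P)ᴴ * X * (P * A i * P)) =
      ⇑(krausMap fun i => P * A i * P) := rfl
  have htrΛS : (Λ - S).trace.re = 1 - S.trace.re := by
    rw [trace_sub, htr, Complex.sub_re, Complex.one_re]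
  rw [hE, hiter, sub_sub_cancel_left, traceNorm_neg, hS.traceNorm_eq, htrΛS]
  have hS_le : S.trace.re ≤ 2 * L * (Λ - P * Λ * P).trace.re :=
    calc S.trace.re ≤ L * C.trace.re := htrS
      _ ≤ L * (2 * (Λ - P * Λ * P).trace.re) := by gcongr
      _ = 2 * L * (Λ - P * Λ * P).trace.re := by ring
  constructor <;> linarith

/-- for the projected channel `Ẽ(X) = ∑ i, Ã_iᴴ X Ã_i` with `Ã_i = P A_i P`,
one has `‖Ẽ^L(Λ) − Λ‖₁ ≤ 2 L δ`; in particular `tr(Ẽ^L(Λ)) ≥ 1 − 2 L δ`,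
where `δ = tr(Λ − PΛP)`. -/
theorem projected_channel_iterate_close_to_fixed_point
    (d D L : ℕ) (hd : 0 < d) (hD : 0 < D) (hL : 0 < L)
    (A : Fin d → Matrix (Fin D) (Fin D) ℂ)
    (Λ : Matrix (Fin D) (Fin D) ℂ) (hΛ : Λ.PosSemidef) (htr : Λ.trace = 1)
    (hA : ∑ i, A i * (A i)ᴴ = 1)
    (hfix : ∑ i, (A i)ᴴ * Λ * A i = Λ)
    (P : Matrix (Fin D) (Fin D) ℂ)
    (hP : Pᴴ = P) (hP2 : P * P = P) (hPΛ : P * Λ = Λ * P) :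
    traceNorm
        ((fun X => ∑ i, (P * A i * P)ᴴ * X * (P * A i * P))^[L] Λ - Λ) ≤
      2 * (L : ℝ) * (Λ - P * Λ * P).trace.re ∧
    1 - 2 * (L : ℝ) * (Λ - P * Λ * P).trace.re ≤
      ((fun X => ∑ i, (P * A i * P)ᴴ * X * (P * A i * P))^[L] Λ).trace.re :=
  projected_channel_iterate_close_to_fixed_point_general d D L A Λ hΛ htr hA hfix P hP hP2 hPΛ
end

section
/- Let D be a positive integer. Let U₁ be a D×D diagonal unitary matrix such that for every positive integer k the diagonal entries of U₁^k are pairwise distinct, and let U₂ be a D×D unitary matrix all of whose entries are nonzero. Define the linear map E(X) = ½(U₁ X U₁† + U₂ X U₂†) on D×D complex matrices. If E(Y) = αY for some nonzero D×D matrix Y and some α ∈ ℂ with |α| = 1, then α = 1 and Y is a scalar multiple of the identity matrix; in other words, the channel E is primitive. -/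
/-!
Both conjugations in `E` preserve the Hilbert–Schmidt norm, so by the parallelogram law
`E Y = α Y` with `|α| = 1` forces `U₁ Y U₁ᴴ = U₂ Y U₂ᴴ = α Y`. Entrywise, the first says that
`Y i j ≠ 0` implies `u i = α u j`; hence each row of `Y` has at most one nonzero entry, and since
`U₂` has no zero entry, `U₂ Y = α Y U₂` then gives every column one. This yields an injective
`σ` with `u ∘ σ = α u`; taking the product over all indices gives `α ^ D = 1`, so the distinct
`D`-th powers force `σ = id` and `α = 1`. Then `Y` is diagonal and commutes with `U₂`, which
makes its diagonal constant.
-/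

open Matrix

variable {n : Type*} [Fintype n]

section Domain

variable {R : Type*} [CommRing R] [IsDomain R]

lemma pow_card_eq_one_of_apply_comp_eq_mul {u : n → R} {σ : n → n} {α : R}
    (hσ : Function.Injective σ) (hu : ∀ j, u j ≠ 0) (h : ∀ j, u (σ j) = α * u j) :
    α ^ Fintype.card n = 1 := by
  have hprod : ∏ j, u (σ j) = ∏ j, u j :=
    Fintype.prod_bijective σ hσ.bijective_of_finite _ _ fun _ => rfl
  simp only [h, Finset.prod_mul_distrib, Finset.prod_const, Finset.card_univ] at hprod
  exact mul_right_cancel₀ (Finset.prod_ne_zero_iff.mpr fun j _ => hu j)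
    (hprod.trans (one_mul _).symm)

lemma eq_one_of_apply_comp_eq_mul {u : n → R} {σ : n → n} {α : R} (hu : ∀ j, u j ≠ 0)
    (hpow : ∀ k, 0 < k → Function.Injective fun j => u j ^ k) (h : ∀ j, u (σ j) = α * u j)
    (j₀ : n) : α = 1 := by
  have hα : α ≠ 0 := fun hα => hu (σ j₀) (by rw [h, hα, zero_mul])
  have hσ : Function.Injective σ := fun a b hab =>
    hpow 1 one_pos (by simpa [h, hα] using congrArg u hab)
  have hcard : 0 < Fintype.card n := Fintype.card_pos_iff.mpr ⟨j₀⟩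
  have hfix : σ j₀ = j₀ := hpow _ hcard <| by
    simp only [h, mul_pow, pow_card_eq_one_of_apply_comp_eq_mul hσ hu h, one_mul]
  exact mul_right_cancel₀ (hu j₀) (by rw [← h, hfix, one_mul])

lemma Matrix.exists_apply_ne_zero_of_mul_eq_smul_mul {U Y : Matrix n n R} {α : R} (hα : α ≠ 0)
    (hU : ∀ i j, U i j ≠ 0) (hY : Y ≠ 0) (hrow : ∀ i k k', Y i k ≠ 0 → Y i k' ≠ 0 → k = k')
    (h : U * Y = α • (Y * U)) (j : n) : ∃ i, Y i j ≠ 0 := by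
  by_contra! hcol
  refine hY (Matrix.ext fun i k => by_contra fun hik => ?_)
  have hsingle : (Y * U) i j = Y i k * U k j :=
    Finset.sum_eq_single k (fun t _ htk =>
      mul_eq_zero_of_left (not_not.mp fun hit => htk (hrow i t k hit hik)) _)
      (absurd (Finset.mem_univ k))
  have hzero : α * (Y * U) i j = 0 := by
    rw [← smul_eq_mul, ← smul_apply, ← h, mul_apply]
    exact Finset.sum_eq_zero fun t _ => by rw [hcol t, mul_zero]
  rw [hsingle] at hzero
  exact mul_ne_zero hα (mul_ne_zero hik (hU k j)) hzero

end Domain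

variable [DecidableEq n]

namespace Matrix

lemma trace_conjTranspose_mul_self_unitary_conj {R : Type*} [CommRing R] [StarRing R]
    {U : Matrix n n R} (hU : Uᴴ * U = 1) (Y : Matrix n n R) :
    ((U * Y * Uᴴ)ᴴ * (U * Y * Uᴴ)).trace = (Yᴴ * Y).trace := by
  have hconj : (U * Y * Uᴴ)ᴴ * (U * Y * Uᴴ) = U * (Yᴴ * Y) * Uᴴ := by
    simp only [conjTranspose_mul, conjTranspose_conjTranspose, Matrix.mul_assoc]
    rw [← Matrix.mul_assoc Uᴴ U, hU, Matrix.one_mul]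
  rw [hconj, trace_mul_cycle, hU, Matrix.one_mul]

section StarOrdered

variable {R : Type*} [CommRing R] [StarRing R] [PartialOrder R] [StarOrderedRing R]
  [NoZeroDivisors R]

lemma eq_of_add_eq_smul_of_trace_conjTranspose_mul_self_eq {A B Y : Matrix n n R} {α : R}
    (hα : star α * α = 1) (hA : (Aᴴ * A).trace = (Yᴴ * Y).trace)
    (hB : (Bᴴ * B).trace = (Yᴴ * Y).trace) (hAB : A + B = (2 * α) • Y) : A = B := by
  have parallelogram :
      (A - B)ᴴ * (A - B) + (A + B)ᴴ * (A + B) = (2 : R) • (Aᴴ * A + Bᴴ * B) := by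
    simp only [conjTranspose_sub, conjTranspose_add, Matrix.sub_mul, Matrix.mul_sub,
      Matrix.add_mul, Matrix.mul_add, two_smul]
    abel
  have hsum : ((A + B)ᴴ * (A + B)).trace = 4 * (Yᴴ * Y).trace := by
    rw [hAB, conjTranspose_smul, smul_mul_smul_comm, trace_smul, smul_eq_mul, star_mul', star_ofNat]
    linear_combination (4 * (Yᴴ * Y).trace) * hα
  rw [← sub_eq_zero, ← trace_conjTranspose_mul_self_eq_zero_iff]
  have := congrArg trace parallelogram
  rw [trace_add, trace_smul, trace_add, hsum, hA, hB, smul_eq_mul] at this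
  linear_combination this

end StarOrdered

open scoped ComplexOrder in
lemma unitary_conj_eq_smul_of_half_add_eq_smul {𝕜 : Type*} [RCLike 𝕜] {U V Y : Matrix n n 𝕜}
    {α : 𝕜} (hU : Uᴴ * U = 1) (hV : Vᴴ * V = 1) (hα : star α * α = 1)
    (h : (1 / 2 : 𝕜) • (U * Y * Uᴴ + V * Y * Vᴴ) = α • Y) :
    U * Y * Uᴴ = α • Y ∧ V * Y * Vᴴ = α • Y := by
  have hsum : U * Y * Uᴴ + V * Y * Vᴴ = (2 * α) • Y := by
    rw [mul_smul, ← h, smul_smul]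
    norm_num
  have hUV := eq_of_add_eq_smul_of_trace_conjTranspose_mul_self_eq hα
    (trace_conjTranspose_mul_self_unitary_conj hU Y)
    (trace_conjTranspose_mul_self_unitary_conj hV Y) hsum
  rw [← hUV, ← two_smul 𝕜, mul_smul] at hsum
  have hU' := smul_right_injective _ two_ne_zero hsum
  exact ⟨hU', hUV ▸ hU'⟩

lemma mul_eq_smul_mul_of_unitary_conj_eq_smul {R : Type*} [CommRing R] [StarRing R]
    {U Y : Matrix n n R} {α : R} (hU : Uᴴ * U = 1) (h : U * Y * Uᴴ = α • Y) :
    U * Y = α • (Y * U) := by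
  rw [← smul_mul_assoc, ← h, Matrix.mul_assoc _ Uᴴ, hU, Matrix.mul_one]

section Domain

variable {R : Type*} [CommRing R] [IsDomain R]

lemma apply_eq_mul_of_diagonal_mul_eq_smul_mul_diagonal {u : n → R} {Y : Matrix n n R} {α : R}
    (h : diagonal u * Y = α • (Y * diagonal u)) {i j : n} (hij : Y i j ≠ 0) :
    u i = α * u j := by
  have hentry := congrFun (congrFun h i) j
  rw [diagonal_mul, smul_apply, mul_diagonal, smul_eq_mul] at hentry
  exact mul_right_cancel₀ hij (by linear_combination hentry)

lemma exists_eq_smul_one_of_mul_comm {U Y : Matrix n n R} (hU : ∀ i j, U i j ≠ 0)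
    (hY : Y.IsDiag) (h : U * Y = Y * U) (j₀ : n) : ∃ c : R, Y = c • 1 := by
  refine ⟨Y j₀ j₀, ?_⟩
  have hconst : ∀ i j, Y i i = Y j j := fun i j => by
    have hentry := congrFun (congrFun h i) j
    rw [← hY.diagonal_diag, mul_diagonal, diagonal_mul] at hentry
    exact mul_right_cancel₀ (hU i j) (hentry.symm.trans (mul_comm _ _))
  nth_rw 1 [← hY.diagonal_diag]
  rw [smul_one_eq_diagonal]
  exact congrArg diagonal (funext fun i => hconst i j₀)

theorem eq_one_and_exists_eq_smul_one {u : n → R} {U Y : Matrix n n R} {α : R}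
    (hu : ∀ i, u i ≠ 0) (hpow : ∀ k, 0 < k → Function.Injective fun i => u i ^ k)
    (hU : ∀ i j, U i j ≠ 0) (hY : Y ≠ 0) (hα : α ≠ 0)
    (hdiag : diagonal u * Y = α • (Y * diagonal u)) (hcomm : U * Y = α • (Y * U)) :
    α = 1 ∧ ∃ c : R, Y = c • 1 := by
  have hentry i j := apply_eq_mul_of_diagonal_mul_eq_smul_mul_diagonal hdiag (i := i) (j := j)
  have hrow : ∀ i k k', Y i k ≠ 0 → Y i k' ≠ 0 → k = k' := fun i k k' hk hk' =>
    hpow 1 one_pos (by simpa [hα] using (hentry i k hk).symm.trans (hentry i k' hk'))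
  choose σ hσ using exists_apply_ne_zero_of_mul_eq_smul_mul hα hU hY hrow hcomm
  obtain ⟨j₀⟩ : Nonempty n := by
    by_contra hn
    exact hY (Matrix.ext fun i => (hn ⟨i⟩).elim)
  obtain rfl : α = 1 := eq_one_of_apply_comp_eq_mul hu hpow (fun j => hentry _ _ (hσ j)) j₀
  refine ⟨rfl, exists_eq_smul_one_of_mul_comm hU (fun i j hij => ?_) (by simpa using hcomm) j₀⟩
  exact not_not.mp fun hne => hij (hpow 1 one_pos (by simpa using hentry i j hne))

end Domain

end Matrix

theorem channel_is_primitive_general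
    (D : ℕ) (u : Fin D → ℂ)
    (hU1 : (Matrix.diagonal u)ᴴ * Matrix.diagonal u = 1)
    (hdist : ∀ k : ℕ, 0 < k → Function.Injective (fun i => u i ^ k))
    (U2 : Matrix (Fin D) (Fin D) ℂ)
    (hU2 : U2ᴴ * U2 = 1) (hU2e : ∀ i j, U2 i j ≠ 0)
    (Y : Matrix (Fin D) (Fin D) ℂ) (hY : Y ≠ 0)
    (α : ℂ) (hα : ‖α‖ = 1)
    (hE : (1 / 2 : ℂ) •
        (Matrix.diagonal u * Y * (Matrix.diagonal u)ᴴ + U2 * Y * U2ᴴ) = α • Y) :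
    α = 1 ∧ ∃ c : ℂ, Y = c • (1 : Matrix (Fin D) (Fin D) ℂ) := by
  have hαα : star α * α = 1 := by
    rw [RCLike.star_def, RCLike.conj_mul, hα]
    norm_num
  have hu : ∀ i, u i ≠ 0 := fun i hi => by
    simpa [hi] using congrFun (congrFun hU1 i) i
  obtain ⟨hdiag, hcomm⟩ := unitary_conj_eq_smul_of_half_add_eq_smul hU1 hU2 hαα hE
  exact eq_one_and_exists_eq_smul_one hu hdist hU2e hY (norm_ne_zero_iff.mp (hα ▸ one_ne_zero))
    (mul_eq_smul_mul_of_unitary_conj_eq_smul hU1 hdiag)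
    (mul_eq_smul_mul_of_unitary_conj_eq_smul hU2 hcomm)

/-- the channel `E(X) = ½(U₁ X U₁ᴴ + U₂ X U₂ᴴ)`, where `U₁` is a diagonal
unitary all of whose powers have pairwise distinct diagonal entries and `U₂` is a unitary
with all entries nonzero, is primitive: any eigenvector with eigenvalue of modulus one has
eigenvalue `1` and is a scalar multiple of the identity. -/
theorem channel_is_primitive
    (D : ℕ) (hD : 0 < D) (u : Fin D → ℂ)
    (hU1 : (Matrix.diagonal u)ᴴ * Matrix.diagonal u = 1)
    (hdist : ∀ k : ℕ, 0 < k → Function.Injective (fun i => u i ^ k))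
    (U2 : Matrix (Fin D) (Fin D) ℂ)
    (hU2 : U2ᴴ * U2 = 1) (hU2e : ∀ i j, U2 i j ≠ 0)
    (Y : Matrix (Fin D) (Fin D) ℂ) (hY : Y ≠ 0)
    (α : ℂ) (hα : ‖α‖ = 1)
    (hE : (1 / 2 : ℂ) •
        (Matrix.diagonal u * Y * (Matrix.diagonal u)ᴴ + U2 * Y * U2ᴴ) = α • Y) :
    α = 1 ∧ ∃ c : ℂ, Y = c • (1 : Matrix (Fin D) (Fin D) ℂ) :=
  channel_is_primitive_general D u hU1 hdist U2 hU2 hU2e Y hY α hα hE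
end
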